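/- Let n ≡ 2 (mod 4), let q ≡ 3 (mod 4) be a prime power, and let X ⊆ 𝔽_q^n. Then the number of pairs at zero distance satisfies #{(x, y) ∈ X × X : ||x − y|| = 0} ≤ |X|²/q + q^{(n−2)/2} |X|. -/

import Mathlib

open Finset

/-- Dot product `x·y = x₁y₁ + ⋯ + xₙyₙ` on `𝔽_q^n`. -/
def dotP {F : Type*} [CommRing F] {n : ℕ} (x y : Fin n → F) : F := ∑ i, x i * y i

/-- The "norm" `‖x‖ = x₁² + ⋯ + xₙ²` on `𝔽_q^n`. -/
def nrm {F : Type*} [CommRing F] {n : ℕ} (x : Fin n → F) : F := ∑ i, x i * x i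

/-- The sphere `S_r = {x ∈ 𝔽_q^n : ‖x‖ = r}`. -/
def sph (F : Type*) [CommRing F] [Fintype F] [DecidableEq F] (n : ℕ) (r : F) :
    Finset (Fin n → F) := Finset.univ.filter fun x => nrm x = r

/-- The dot product set `∏(E) = {x·y : x, y ∈ E}`. -/
def prodSet {F : Type*} [CommRing F] [DecidableEq F] {n : ℕ} (E : Finset (Fin n → F)) :
    Finset F := (E ×ˢ E).image fun p => dotP p.1 p.2

/-- Fourier transform of the indicator function of `X`:
`X̂(m) = q^{-n} ∑_{x ∈ X} χ(-x·m)`. -/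
noncomputable def fourierCoef {F : Type*} [CommRing F] [Fintype F] {n : ℕ}
    (χ : AddChar F ℂ) (X : Finset (Fin n → F)) (m : Fin n → F) : ℂ :=
  ((Fintype.card F : ℂ) ^ n)⁻¹ * ∑ x ∈ X, χ (-(dotP x m))

/-! Let `ψ` be a primitive additive character of `𝔽_q`, `g` the quadratic Gauss sum, `N` the
number of pairs at distance zero and `T(m) = ∑_{x ∈ X} ψ(x·m)`. Orthogonality in `t` gives `q N = ∑_t ∑_{x,y ∈ X} ψ(t‖x - y‖)`,
whose `t = 0` term is `|X|²`. For `t ≠ 0`, completing the square coordinatewise gives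
`g^n ψ(t‖z‖) = ∑_m ψ(-‖m‖/(4t) + z·m)` (for even `n`), so summing over `t ≠ 0` and using
Plancherel `∑_m |T(m)|² = q^n |X|` yields
`g^n (q N - |X|²) = q ∑_{‖m‖ = 0} |T(m)|² - q^n |X|`.
If `q ≡ 3 (mod 4)` then `g² = -q`, and if moreover `n/2` is odd then `g^n = -q^{n/2}` is negative:
the isotropic frequencies `‖m‖ = 0` can only decrease `N`, and `q N ≤ |X|² + q^{n/2} |X|`. -/

lemma AddChar.map_sum_eq_prod {R M ι : Type*} [AddCommMonoid R] [CommMonoid M]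
    (ψ : AddChar R M) (s : Finset ι) (f : ι → R) : ψ (∑ i ∈ s, f i) = ∏ i ∈ s, ψ (f i) :=
  map_prod ψ.toMonoidHom (fun i => Multiplicative.ofAdd (f i)) s

lemma dotP_sub_left {R : Type*} [CommRing R] {n : ℕ} (x y z : Fin n → R) :
    dotP (x - y) z = dotP x z - dotP y z := by
  simp only [dotP, Pi.sub_apply, sub_mul, sum_sub_distrib]

lemma four_ne_zero_of_ringChar_ne_two {F : Type*} [Field F] (hF : ringChar F ≠ 2) :
    (4 : F) ≠ 0 := by
  have h2 := Ring.two_ne_zero hF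
  rw [show (4 : F) = 2 * 2 by norm_num]
  exact mul_ne_zero h2 h2

section FiniteField

variable {F : Type*} [Field F] [Fintype F]

local notation "q" => Fintype.card F

lemma ringChar_ne_two_of_card_mod_four_eq_three (hq : q % 4 = 3) : ringChar F ≠ 2 := fun h => by
  have := FiniteField.even_card_of_char_two h
  omega

/-- `expSum ψ X m = q ^ n * conj (fourierCoef ψ X m)`. -/
noncomputable def expSum {n : ℕ} (ψ : AddChar F ℂ) (X : Finset (Fin n → F)) (m : Fin n → F) :
    ℂ :=
  ∑ x ∈ X, ψ (dotP x m)

lemma normSq_expSum {n : ℕ} (ψ : AddChar F ℂ) (X : Finset (Fin n → F)) (m : Fin n → F) :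
    (Complex.normSq (expSum ψ X m) : ℂ) = ∑ p ∈ X ×ˢ X, ψ (dotP (p.1 - p.2) m) := by
  simp only [← Complex.mul_conj, expSum, map_sum, sum_mul_sum, sum_product, dotP_sub_left,
    AddChar.map_sub_eq_div, div_eq_mul_inv, AddChar.inv_apply_eq_conj]

variable [DecidableEq F]

noncomputable def complexQuadraticChar (F : Type*) [Field F] [Fintype F] [DecidableEq F] :
    MulChar F ℂ :=
  (quadraticChar F).ringHomComp (Int.castRingHom ℂ)

local notation "η" => complexQuadraticChar F

@[simp]
lemma complexQuadraticChar_apply (a : F) : η a = quadraticChar F a := rfl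

lemma complexQuadraticChar_isQuadratic : (η).IsQuadratic :=
  (quadraticChar_isQuadratic F).comp _

lemma complexQuadraticChar_pow_of_even {n : ℕ} (hn : Even n) {a : F} (ha : a ≠ 0) :
    η a ^ n = 1 := by
  have h := MulChar.pow_apply_coe η n (Units.mk0 a ha)
  rw [complexQuadraticChar_isQuadratic.pow_even hn, MulChar.one_apply_coe, Units.val_mk0] at h
  exact h.symm

lemma card_sqrts_eq_complexQuadraticChar_add_one (hF : ringChar F ≠ 2) (u : F) :
    (#{v : F | v ^ 2 = u} : ℂ) = η u + 1 := by
  have h := congrArg (Int.cast : ℤ → ℂ) (quadraticChar_card_sqrts hF u)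
  push_cast at h
  simpa [Set.toFinset_ofPred] using h

theorem sum_addChar_mul_sq (hF : ringChar F ≠ 2) {ψ : AddChar F ℂ} (hψ : ψ.IsPrimitive)
    {t : F} (ht : t ≠ 0) :
    ∑ v, ψ (t * v ^ 2) = η t * gaussSum η ψ := by
  have hfiber : ∑ v, ψ (t * v ^ 2) = ∑ u, (η u + 1) * ψ (t * u) := by
    rw [← sum_fiberwise univ (· ^ 2)]
    refine sum_congr rfl fun u _ => ?_
    rw [← card_sqrts_eq_complexQuadraticChar_add_one hF, ← nsmul_eq_mul, ← sum_const]
    exact sum_congr rfl fun v hv => by rw [(mem_filter.mp hv).2]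
  have horth : ∑ u, ψ (t * u) = 0 := by
    simpa [ht, mul_comm] using AddChar.sum_mulShift t hψ
  have hshift := gaussSum_mulShift_eq η ψ (Units.mk0 t ht)
  rw [complexQuadraticChar_isQuadratic.inv] at hshift
  simp only [hfiber, add_mul, one_mul, sum_add_distrib, horth, add_zero]
  simpa [gaussSum, AddChar.mulShift_apply] using hshift

theorem gaussSum_sq_of_card_mod_four_eq_three (hq : q % 4 = 3) {ψ : AddChar F ℂ}
    (hψ : ψ.IsPrimitive) : gaussSum η ψ ^ 2 = -q := by
  have hF := ringChar_ne_two_of_card_mod_four_eq_three hq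
  have hη : η ≠ 1 :=
    (MulChar.ringHomComp_ne_one_iff Int.cast_injective).mpr (quadraticChar_ne_one hF)
  rw [gaussSum_sq hη complexQuadraticChar_isQuadratic hψ, complexQuadraticChar_apply,
    quadraticChar_neg_one hF, ZMod.χ₄_nat_three_mod_four hq]
  simp

theorem sum_addChar_mul_sq_add_mul (hF : ringChar F ≠ 2) {ψ : AddChar F ℂ} (hψ : ψ.IsPrimitive)
    {t : F} (ht : t ≠ 0) (b : F) :
    ∑ v, ψ (t * v ^ 2 + b * v) = η t * gaussSum η ψ * ψ (-b ^ 2 / (4 * t)) := by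
  have h2 : (2 : F) ≠ 0 := Ring.two_ne_zero hF
  have h4 := four_ne_zero_of_ringChar_ne_two hF
  have hsquare : ∀ v, t * v ^ 2 + b * v = t * (v + b / (2 * t)) ^ 2 + -b ^ 2 / (4 * t) := by
    intro v
    field_simp
    ring
  have hshift : ∑ v, ψ (t * (v + b / (2 * t)) ^ 2) = ∑ w, ψ (t * w ^ 2) :=
    Fintype.sum_equiv (Equiv.addRight _) _ _ fun _ => rfl
  simp_rw [hsquare, AddChar.map_add_eq_mul, ← sum_mul, hshift, sum_addChar_mul_sq hF hψ ht]

section Vectors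

variable {n : ℕ}

theorem sum_addChar_dotP {ψ : AddChar F ℂ} (hψ : ψ.IsPrimitive) (z : Fin n → F) :
    ∑ m, ψ (dotP z m) = if z = 0 then (q : ℂ) ^ n else 0 := by
  have hcoord : ∀ i, ∑ u, ψ (z i * u) = if z i = 0 then (q : ℂ) else 0 := by
    intro i
    simpa [mul_comm] using AddChar.sum_mulShift (z i) hψ
  simp_rw [dotP, AddChar.map_sum_eq_prod]
  rw [← Fintype.prod_sum fun i u => ψ (z i * u)]
  simp [hcoord, prod_ite_zero, funext_iff]

theorem sum_addChar_mul_nrm_add_dotP (hF : ringChar F ≠ 2) {ψ : AddChar F ℂ}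
    (hψ : ψ.IsPrimitive) {a : F} (ha : a ≠ 0) (z : Fin n → F) :
    ∑ m, ψ (a * nrm m + dotP z m) = (η a * gaussSum η ψ) ^ n * ψ (-nrm z / (4 * a)) := by
  have hsplit : ∀ m, a * nrm m + dotP z m = ∑ i, (a * m i ^ 2 + z i * m i) := by
    intro m
    simp only [nrm, dotP, mul_sum, ← sum_add_distrib, sq]
  have hnrm : -nrm z / (4 * a) = ∑ i, -z i ^ 2 / (4 * a) := by
    simp only [nrm, ← sum_div, ← sum_neg_distrib, sq]
  simp_rw [hsplit, AddChar.map_sum_eq_prod]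
  rw [← Fintype.prod_sum fun i u => ψ (a * u ^ 2 + z i * u)]
  simp_rw [sum_addChar_mul_sq_add_mul hF hψ ha, prod_mul_distrib, prod_const, card_univ,
    Fintype.card_fin, hnrm, AddChar.map_sum_eq_prod, mul_pow]

theorem sum_normSq_expSum {ψ : AddChar F ℂ} (hψ : ψ.IsPrimitive) (X : Finset (Fin n → F)) :
    ∑ m, (Complex.normSq (expSum ψ X m) : ℂ) = (q : ℂ) ^ n * #X := by
  simp_rw [normSq_expSum]
  rw [sum_comm]
  simp_rw [sum_addChar_dotP hψ, sub_eq_zero, sum_product, sum_ite_eq, sum_ite_mem, inter_self,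
    sum_const, nsmul_eq_mul]
  ring

theorem sum_erase_zero_addChar_neg_inv_mul (hF : ringChar F ≠ 2) {ψ : AddChar F ℂ}
    (hψ : ψ.IsPrimitive) (c : F) :
    ∑ t ∈ univ.erase 0, ψ (-(4 * t)⁻¹ * c) = (if c = 0 then (q : ℂ) else 0) - 1 := by
  have h4 := four_ne_zero_of_ringChar_ne_two hF
  -- since `0⁻¹ = 0`, this is a bijection of the whole field
  have hinv : Function.Involutive fun t : F => -(4 * t)⁻¹ := by
    intro t
    rcases eq_or_ne t 0 with rfl | ht
    · simp
    · field_simp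
  rw [sum_erase_eq_sub (mem_univ 0),
    Fintype.sum_bijective _ hinv.bijective _ (fun s => ψ (s * c)) fun _ => rfl,
    AddChar.sum_mulShift c hψ]
  simp

theorem gaussSum_pow_mul_sum_addChar_mul_nrm_sub (hF : ringChar F ≠ 2) {ψ : AddChar F ℂ}
    (hψ : ψ.IsPrimitive) (hn : Even n) {t : F} (ht : t ≠ 0) (X : Finset (Fin n → F)) :
    gaussSum η ψ ^ n * ∑ p ∈ X ×ˢ X, ψ (t * nrm (p.1 - p.2)) =
      ∑ m, ψ (-(4 * t)⁻¹ * nrm m) * Complex.normSq (expSum ψ X m) := by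
  have h4 := four_ne_zero_of_ringChar_ne_two hF
  have ha : -(4 * t)⁻¹ ≠ 0 := by simp [ht, h4]
  have hpoint : ∀ z : Fin n → F, gaussSum η ψ ^ n * ψ (t * nrm z) =
      ∑ m, ψ (-(4 * t)⁻¹ * nrm m + dotP z m) := by
    intro z
    rw [sum_addChar_mul_nrm_add_dotP hF hψ ha, mul_pow, complexQuadraticChar_pow_of_even hn ha,
      one_mul]
    congr 2
    field_simp
  simp_rw [normSq_expSum, mul_sum, hpoint, AddChar.map_add_eq_mul]
  exact sum_comm

def zeroDistPairs (X : Finset (Fin n → F)) : Finset ((Fin n → F) × (Fin n → F)) :=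
  {p ∈ X ×ˢ X | nrm (p.1 - p.2) = 0}

theorem gaussSum_pow_mul_card_zeroDistPairs (hF : ringChar F ≠ 2) {ψ : AddChar F ℂ}
    (hψ : ψ.IsPrimitive) (hn : Even n) (X : Finset (Fin n → F)) :
    gaussSum η ψ ^ n * ((q : ℂ) * #(zeroDistPairs X) - #X ^ 2) =
      q * ∑ m with nrm m = 0, (Complex.normSq (expSum ψ X m) : ℂ) - q ^ n * #X := by
  have hcount : (q : ℂ) * #(zeroDistPairs X) = ∑ t, ∑ p ∈ X ×ˢ X, ψ (t * nrm (p.1 - p.2)) := by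
    rw [sum_comm]
    simp_rw [AddChar.sum_mulShift _ hψ]
    simp [zeroDistPairs, sum_ite, mul_comm]
  have hzero : ∑ p ∈ X ×ˢ X, ψ (0 * nrm (p.1 - p.2)) = #X ^ 2 := by simp [sq]
  rw [hcount, ← add_sum_erase _ _ (mem_univ 0), hzero, add_sub_cancel_left, mul_sum,
    sum_congr rfl fun t ht =>
      gaussSum_pow_mul_sum_addChar_mul_nrm_sub hF hψ hn (ne_of_mem_erase ht) X,
    sum_comm]
  simp_rw [← sum_mul, sum_erase_zero_addChar_neg_inv_mul hF hψ, sub_mul, sum_sub_distrib,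
    one_mul, ite_mul, zero_mul, sum_ite, sum_const_zero, add_zero, sum_normSq_expSum hψ, mul_sum]

end Vectors

theorem card_mul_card_zeroDistPairs_le (hq : q % 4 = 3) {k : ℕ} (hk : Odd k)
    (X : Finset (Fin (2 * k) → F)) :
    (q : ℝ) * #(zeroDistPairs X) ≤ #X ^ 2 + q ^ k * #X := by
  have hF := ringChar_ne_two_of_card_mod_four_eq_three hq
  set ψ := AddChar.FiniteField.primitiveChar_to_Complex F
  have hψ : ψ.IsPrimitive := AddChar.FiniteField.primitiveChar_to_Complex_isPrimitive F
  have key := gaussSum_pow_mul_card_zeroDistPairs hF hψ (even_two_mul k) X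
  rw [pow_mul, gaussSum_sq_of_card_mod_four_eq_three hq hψ, hk.neg_pow, pow_mul'] at key
  set S := ∑ m with nrm m = 0, Complex.normSq (expSum ψ X m)
  have hS : 0 ≤ S := sum_nonneg fun _ _ => Complex.normSq_nonneg _
  have hreal : -(q : ℝ) ^ k * (q * #(zeroDistPairs X) - #X ^ 2) =
      q * S - ((q : ℝ) ^ k) ^ 2 * #X := by
    exact_mod_cast key
  have hqk : 0 < (q : ℝ) ^ k := by positivity
  nlinarith [mul_nonneg (Nat.cast_nonneg q : (0 : ℝ) ≤ q) hS]

end FiniteField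

/-- for `n ≡ 2 (mod 4)`, `q ≡ 3 (mod 4)` and `X ⊆ 𝔽_q^n`,
`#{(x,y) ∈ X² : ‖x-y‖ = 0} ≤ |X|²/q + q^{(n-2)/2} |X|`. -/
theorem stmt11 (n : ℕ) (hn : n % 4 = 2)
    (F : Type*) [Field F] [Fintype F] [DecidableEq F]
    (hq : Fintype.card F % 4 = 3)
    (X : Finset (Fin n → F)) :
    ((((X ×ˢ X).filter fun p => nrm (p.1 - p.2) = 0).card : ℝ)) ≤
      (X.card : ℝ) ^ 2 / (Fintype.card F : ℝ) +
        (Fintype.card F : ℝ) ^ (((n : ℝ) - 2) / 2) * (X.card : ℝ) := by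
  obtain ⟨k, rfl, hk⟩ : ∃ k, n = 2 * k ∧ Odd k := ⟨n / 2, by omega, Nat.odd_iff.mpr (by omega)⟩
  have hexp : (((2 * k : ℕ) : ℝ) - 2) / 2 = ((k - 1 : ℕ) : ℝ) := by
    rw [Nat.cast_sub hk.pos]
    push_cast
    ring
  have hpow : (Fintype.card F : ℝ) ^ k = Fintype.card F * Fintype.card F ^ (k - 1) := by
    rw [← pow_succ', Nat.sub_add_cancel hk.pos]
  have hq0 : (0 : ℝ) < Fintype.card F := by exact_mod_cast Fintype.card_pos
  have hbound := card_mul_card_zeroDistPairs_le hq hk X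
  rw [hpow, zeroDistPairs] at hbound
  rw [hexp, Real.rpow_natCast, div_add' _ _ _ hq0.ne', le_div_iff₀ hq0]
  linarith
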